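/- arXiv:2012.01156 — 4 statements merged into one kernel-verified Lean document; each statement's English description precedes it below -/
import Mathlib

section
/- Let S be a symmetric n\times n real matrix with zero diagonal and \beta > 0. For every \epsilon > 0 there exists \alpha_1 > 0 such that for all \alpha > \alpha_1, every critical point x of U(x) = \sum_i x_i^4/4 + ((\beta - \alpha^2)/2)|x|^2 - (1/2) x^T S x satisfies |x|/\alpha^2 < \epsilon. -/
/-!
At a coordinate where `|xᵢ|` is maximal, the critical point equation
`xᵢ³ = (α² - β) xᵢ + (S x)ᵢ` gives `‖x‖∞³ ≤ (|α² - β| + ‖S‖) ‖x‖∞`, so `‖x‖∞ = O(α)`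
and hence also `|x| ≤ √n ‖x‖∞ = O(α)`, which is `o(α²)`.
-/

open Matrix

attribute [local instance] Matrix.linftyOpNormedAddCommGroup

section

variable {ι : Type*} [Fintype ι]

theorem norm_sq_le_of_cube_eq (S : Matrix ι ι ℝ) (c : ℝ) (x : ι → ℝ)
    (hx : ∀ i, x i ^ 3 = c * x i + (S *ᵥ x) i) : ‖x‖ ^ 2 ≤ |c| + ‖S‖ := by
  by_contra! hlt
  have hpos : 0 < ‖x‖ := by
    by_contra! h
    nlinarith [norm_nonneg x, norm_nonneg S, abs_nonneg c]
  have hcoord (i : ι) : ‖x i‖ ^ 3 ≤ (|c| + ‖S‖) * ‖x‖ :=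
    calc ‖x i‖ ^ 3 = ‖c * x i + (S *ᵥ x) i‖ := by rw [← norm_pow, hx]
      _ ≤ |c| * ‖x i‖ + ‖(S *ᵥ x) i‖ := by
        rw [← Real.norm_eq_abs, ← norm_mul]; exact norm_add_le _ _
      _ ≤ |c| * ‖x‖ + ‖S‖ * ‖x‖ := by
        gcongr
        · exact norm_le_pi_norm x i
        · exact (norm_le_pi_norm _ i).trans (linfty_opNorm_mulVec S x)
      _ = (|c| + ‖S‖) * ‖x‖ := by ring
  refine lt_irrefl ‖x‖ ((pi_norm_lt_iff hpos).2 fun i => ?_)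
  by_contra! hle
  have := pow_le_pow_left₀ hpos.le hle 3
  nlinarith [hcoord i]

theorem sqrt_sum_sq_le_sqrt_card_mul_norm (x : ι → ℝ) :
    √(∑ i, x i ^ 2) ≤ √(Fintype.card ι) * ‖x‖ := by
  rw [← Real.sqrt_sq (norm_nonneg x), ← Real.sqrt_mul (Nat.cast_nonneg _)]
  gcongr
  calc ∑ i, x i ^ 2 = ∑ i, ‖x i‖ ^ 2 := by simp only [Real.norm_eq_abs, sq_abs]
    _ ≤ ∑ _i : ι, ‖x‖ ^ 2 := by gcongr with i; exact norm_le_pi_norm x i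
    _ = Fintype.card ι * ‖x‖ ^ 2 := by simp

end

theorem critical_points_apriori_estimate_general (n : ℕ) (S : Matrix (Fin n) (Fin n) ℝ) (β : ℝ) :
    ∀ ε > (0 : ℝ), ∃ α₁ > (0 : ℝ), ∀ α > α₁, ∀ x : Fin n → ℝ,
      (∀ i, (x i) ^ 3 + (β - α ^ 2) * x i - ∑ j, S i j * x j = 0) →
      Real.sqrt (∑ i, (x i) ^ 2) / α ^ 2 < ε := by
  intro ε hε
  set L := √(n * (1 + |β| + ‖S‖))
  refine ⟨1 + L / ε, by positivity, fun α hα x hx => ?_⟩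
  have hLα : L < α * ε := (div_lt_iff₀ hε).1 (by linarith)
  have hα1 : 1 ≤ α := by linarith [show 0 ≤ L / ε by positivity]
  have hcrit (i : Fin n) : x i ^ 3 = (α ^ 2 - β) * x i + (S *ᵥ x) i := by
    simp only [mulVec, dotProduct]; linarith [hx i]
  have hsup : ‖x‖ ^ 2 ≤ (1 + |β| + ‖S‖) * α ^ 2 := by
    have hc : |α ^ 2 - β| ≤ α ^ 2 + |β| := (abs_sub _ _).trans (by rw [abs_sq])
    have hα2 : 0 ≤ α ^ 2 - 1 := by nlinarith
    nlinarith [norm_sq_le_of_cube_eq S _ x hcrit, mul_nonneg (norm_nonneg S) hα2,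
      mul_nonneg (abs_nonneg β) hα2]
  rw [div_lt_iff₀ (by positivity)]
  calc √(∑ i, x i ^ 2) ≤ √n * ‖x‖ := by simpa using sqrt_sum_sq_le_sqrt_card_mul_norm x
    _ ≤ √n * √((1 + |β| + ‖S‖) * α ^ 2) := by gcongr; exact Real.le_sqrt_of_sq_le hsup
    _ = L * α := by
      rw [Real.sqrt_mul (by positivity), Real.sqrt_sq (by linarith), ← mul_assoc,
        ← Real.sqrt_mul (Nat.cast_nonneg _)]
    _ < α * ε * α := by gcongr
    _ = ε * α ^ 2 := by ring

/-- A priori estimate: for every `ε > 0` there is `α₁ > 0` such that for all `α > α₁`,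
every critical point `x` of `U(x) = ∑ xᵢ⁴/4 + ((β-α²)/2)|x|² - (1/2)xᵀSx`
satisfies `|x|/α² < ε`. -/
theorem critical_points_apriori_estimate (n : ℕ) (S : Matrix (Fin n) (Fin n) ℝ)
    (hS : S.IsSymm) (hSd : ∀ i, S i i = 0) (β : ℝ) (hβ : 0 < β) :
    ∀ ε > (0 : ℝ), ∃ α₁ > (0 : ℝ), ∀ α > α₁, ∀ x : Fin n → ℝ,
      (∀ i, (x i) ^ 3 + (β - α ^ 2) * x i - ∑ j, S i j * x j = 0) →
      Real.sqrt (∑ i, (x i) ^ 2) / α ^ 2 < ε :=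
  critical_points_apriori_estimate_general n S β
end

section
/- Let \beta > 1 and \alpha^2 > \beta + 2. The function U(x_1,x_2) = (x_1^4 + x_2^4)/4 + ((\beta - \alpha^2)/2)(x_1^2 + x_2^2) - x_1 x_2 has exactly 9 critical points, of which exactly 4 are local minima: (\lambda_1,\lambda_1), (-\lambda_1,-\lambda_1), (\lambda_2,-\lambda_2), (-\lambda_2,\lambda_2), where \lambda_1 = \sqrt{\alpha^2 - \beta + 1} and \lambda_2 = \sqrt{\alpha^2 - \beta - 1}. -/
/-!
Put `c = α² - β > 2`. Adding and subtracting the two critical-point equations gives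
`(x - y)(x² + xy + y² - (c - 1)) = 0` and `(x + y)(x² - xy + y² - (c + 1)) = 0`, so the critical
points are the origin, the two points `x = y`, `x² = c + 1`, the two points `x = -y`, `x² = c - 1`,
and the four points `xy = -1`, `x² + y² = c`. Three rewritings of `U` sort them:
* `U = const + ((x² - (c + 1))² + (y² - (c + 1))²)/4 + (x - y)²/2`: the diagonal points are global
  minima;
* `U = const + ((x² - (c - 1))² + (y² - (c - 1))²)/4 - (x + y)²/2`: near an antidiagonal point
  `(a, -a)` we have `(x² - a²)² ≥ 4 (x - a)²` and `(y² - a²)² ≥ 4 (y + a)²` because `a² > 1`, which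
  beats `(x + y)²/2`, so these are local minima;
* `U = (x² + y² - c)²/4 - (xy + 1)²/2 + const`: on the circle `x² + y² = c` the points with
  `xy = -1` are maxima, so they are saddles. Along the diagonal `U` decreases from the origin.
-/

open Set Filter Topology

theorem IsLocalMin.comp_add_smul {E : Type*} [AddCommGroup E] [Module ℝ E] [TopologicalSpace E]
    [ContinuousAdd E] [ContinuousSMul ℝ E] {f : E → ℝ} {p : E} (h : IsLocalMin f p) (w : E) :
    IsLocalMin (fun t : ℝ => f (p + t • w)) 0 :=
  IsLocalMin.comp_continuous (g := fun t : ℝ => p + t • w) (by simpa using h) (by fun_prop)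

theorem IsLocalMin.eq_zero_of_eq_add_mul {g h : ℝ → ℝ} (hg : IsLocalMin g 0)
    (hh : ContinuousAt h 0) (hgh : ∀ t, g t = g 0 + t * h t) : h 0 = 0 := by
  refine hg.hasDerivAt_eq_zero (hasDerivAt_iff_tendsto_slope.mpr ?_)
  refine (hh.tendsto.mono_left nhdsWithin_le_nhds).congr' ?_
  filter_upwards [self_mem_nhdsWithin] with t (ht : t ≠ 0)
  rw [slope_def_field, hgh t]
  field_simp
  ring

theorem IsLocalMin.nonneg_of_eq_add_sq_mul {g h : ℝ → ℝ} (hg : IsLocalMin g 0)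
    (hh : ContinuousAt h 0) (hgh : ∀ t, g t = g 0 + t ^ 2 * h t) : 0 ≤ h 0 := by
  by_contra! hneg
  obtain ⟨t, ⟨hmin, hht⟩, ht : t ≠ 0⟩ :=
    (((hg.and (hh.eventually_lt continuousAt_const hneg)).filter_mono nhdsWithin_le_nhds).and
      (self_mem_nhdsWithin (s := {0}ᶜ))).exists
  have : 0 < t ^ 2 := by positivity
  rw [hgh t] at hmin
  nlinarith [mul_neg_of_pos_of_neg this hht]

theorem Real.setOf_sq_eq {s : ℝ} (hs : 0 ≤ s) : {x : ℝ | x ^ 2 = s} = {√s, -√s} :=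
  ext fun x => by
    rw [mem_ofPred_eq, mem_insert_iff, mem_singleton_iff, ← sq_eq_sq_iff_eq_or_eq_neg,
      Real.sq_sqrt hs]

theorem Real.ncard_setOf_sq_eq {s : ℝ} (hs : 0 < s) : {x : ℝ | x ^ 2 = s}.ncard = 2 := by
  rw [Real.setOf_sq_eq hs.le]
  exact ncard_pair (by linarith [Real.sqrt_pos.mpr hs])

noncomputable def pairPotential (c : ℝ) (p : ℝ × ℝ) : ℝ :=
  (p.1 ^ 4 + p.2 ^ 4) / 4 - c / 2 * (p.1 ^ 2 + p.2 ^ 2) - p.1 * p.2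

def criticalSet (c : ℝ) : Set (ℝ × ℝ) :=
  {p | p.1 ^ 3 - c * p.1 - p.2 = 0 ∧ p.2 ^ 3 - c * p.2 - p.1 = 0}

def diagonalWells (c : ℝ) : Set (ℝ × ℝ) := {p | p.2 = p.1 ∧ p.1 ^ 2 = c + 1}

def antidiagonalWells (c : ℝ) : Set (ℝ × ℝ) := {p | p.2 = -p.1 ∧ p.1 ^ 2 = c - 1}

def saddles (c : ℝ) : Set (ℝ × ℝ) := {p | p.1 * p.2 = -1 ∧ p.1 ^ 2 + p.2 ^ 2 = c}

section

variable {c : ℝ}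

theorem pairPotential_comp_swap (c : ℝ) : pairPotential c ∘ Prod.swap = pairPotential c := by
  ext p
  simp only [Function.comp_apply, pairPotential, Prod.fst_swap, Prod.snd_swap]
  ring

theorem partialDeriv_fst_eq_zero_of_isLocalMin {p : ℝ × ℝ} (h : IsLocalMin (pairPotential c) p) :
    p.1 ^ 3 - c * p.1 - p.2 = 0 := by
  have hexp : ∀ t : ℝ, pairPotential c (p + t • (1, 0)) = pairPotential c (p + (0 : ℝ) • (1, 0))
      + t * (p.1 ^ 3 - c * p.1 - p.2 + t * (3 * p.1 ^ 2 - c) / 2 + p.1 * t ^ 2 + t ^ 3 / 4) :=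
    fun t => by
      simp only [pairPotential, Prod.fst_add, Prod.snd_add, Prod.smul_mk, smul_eq_mul]
      ring
  simpa using (h.comp_add_smul (1, 0)).eq_zero_of_eq_add_mul (by fun_prop) hexp

theorem mem_criticalSet_of_isLocalMin {p : ℝ × ℝ} (h : IsLocalMin (pairPotential c) p) :
    p ∈ criticalSet c := by
  have hswap : IsLocalMin (pairPotential c) p.swap := by
    have := IsLocalMin.comp_continuous (g := Prod.swap) (b := p.swap) (by simpa using h)
      continuous_swap.continuousAt
    rwa [pairPotential_comp_swap] at this
  exact ⟨partialDeriv_fst_eq_zero_of_isLocalMin h, partialDeriv_fst_eq_zero_of_isLocalMin hswap⟩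

theorem criticalSet_eq (c : ℝ) :
    criticalSet c = {0} ∪ (diagonalWells c ∪ antidiagonalWells c) ∪ saddles c := by
  ext ⟨x, y⟩
  simp only [criticalSet, diagonalWells, antidiagonalWells, saddles, mem_union, mem_ofPred_eq,
    mem_singleton_iff, Prod.mk_eq_zero]
  constructor
  · rintro ⟨hx, hy⟩
    have hdiff : (x - y) * (x ^ 2 + x * y + y ^ 2 - (c - 1)) = 0 := by
      linear_combination hx - hy
    have hsum : (x + y) * (x ^ 2 - x * y + y ^ 2 - (c + 1)) = 0 := by
      linear_combination hx + hy
    rcases mul_eq_zero.mp hdiff with hd | hd <;> rcases mul_eq_zero.mp hsum with hs | hs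
    · exact Or.inl (Or.inl ⟨by linarith, by linarith⟩)
    · have hyx : y = x := by linarith
      subst hyx
      exact Or.inl (Or.inr (Or.inl ⟨rfl, by linear_combination hs⟩))
    · have hyx : y = -x := by linarith
      subst hyx
      exact Or.inl (Or.inr (Or.inr ⟨rfl, by linear_combination hd⟩))
    · exact Or.inr ⟨by linarith, by linarith⟩
  · rintro ((⟨rfl, rfl⟩ | ⟨rfl, h⟩ | ⟨rfl, h⟩) | ⟨hxy, hsq⟩)
    · norm_num
    · constructor <;> linear_combination y * h
    · exact ⟨by linear_combination x * h, by linear_combination (-x) * h⟩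
    · constructor
      · linear_combination x * hsq - y * hxy
      · linear_combination y * hsq - x * hxy

theorem pairPotential_eq_of_mem_diagonalWells {p : ℝ × ℝ} (hp : p ∈ diagonalWells c)
    (q : ℝ × ℝ) : pairPotential c q = pairPotential c p
      + ((q.1 ^ 2 - (c + 1)) ^ 2 + (q.2 ^ 2 - (c + 1)) ^ 2) / 4 + (q.1 - q.2) ^ 2 / 2 := by
  obtain ⟨hp2, hp1⟩ := hp
  simp only [pairPotential, hp2]
  linear_combination ((c + 1 - p.1 ^ 2) / 2) * hp1

theorem pairPotential_eq_of_mem_antidiagonalWells {p : ℝ × ℝ} (hp : p ∈ antidiagonalWells c)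
    (q : ℝ × ℝ) : pairPotential c q = pairPotential c p
      + ((q.1 ^ 2 - (c - 1)) ^ 2 + (q.2 ^ 2 - (c - 1)) ^ 2) / 4 - (q.1 + q.2) ^ 2 / 2 := by
  obtain ⟨hp2, hp1⟩ := hp
  simp only [pairPotential, hp2]
  linear_combination ((c - 1 - p.1 ^ 2) / 2) * hp1

theorem pairPotential_eq_circle (c : ℝ) (q : ℝ × ℝ) : pairPotential c q
    = (q.1 ^ 2 + q.2 ^ 2 - c) ^ 2 / 4 - (q.1 * q.2 + 1) ^ 2 / 2 + (2 - c ^ 2) / 4 := by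
  simp only [pairPotential]
  ring

theorem isLocalMin_of_mem_diagonalWells {p : ℝ × ℝ} (hp : p ∈ diagonalWells c) :
    IsLocalMin (pairPotential c) p :=
  Eventually.of_forall fun q => by
    rw [pairPotential_eq_of_mem_diagonalWells hp q]
    nlinarith [sq_nonneg (q.1 ^ 2 - (c + 1)), sq_nonneg (q.2 ^ 2 - (c + 1)), sq_nonneg (q.1 - q.2)]

theorem isLocalMin_of_mem_antidiagonalWells (hc : 2 < c) {p : ℝ × ℝ}
    (hp : p ∈ antidiagonalWells c) : IsLocalMin (pairPotential c) p := by
  obtain ⟨hp2, hp1⟩ := hp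
  have hfst : ∀ᶠ q : ℝ × ℝ in 𝓝 p, 4 < (q.1 + p.1) ^ 2 :=
    (continuous_const.continuousAt).eventually_lt (by fun_prop) (by nlinarith)
  have hsnd : ∀ᶠ q : ℝ × ℝ in 𝓝 p, 4 < (q.2 - p.1) ^ 2 :=
    (continuous_const.continuousAt).eventually_lt (by fun_prop) (by rw [hp2]; nlinarith)
  filter_upwards [hfst, hsnd] with q hq1 hq2
  rw [pairPotential_eq_of_mem_antidiagonalWells ⟨hp2, hp1⟩ q, ← hp1]
  have h1 : 4 * (q.1 - p.1) ^ 2 ≤ (q.1 ^ 2 - p.1 ^ 2) ^ 2 := by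
    rw [show (q.1 ^ 2 - p.1 ^ 2) ^ 2 = (q.1 - p.1) ^ 2 * (q.1 + p.1) ^ 2 by ring]
    nlinarith [sq_nonneg (q.1 - p.1)]
  have h2 : 4 * (q.2 + p.1) ^ 2 ≤ (q.2 ^ 2 - p.1 ^ 2) ^ 2 := by
    rw [show (q.2 ^ 2 - p.1 ^ 2) ^ 2 = (q.2 + p.1) ^ 2 * (q.2 - p.1) ^ 2 by ring]
    nlinarith [sq_nonneg (q.2 + p.1)]
  nlinarith [sq_nonneg (q.1 - p.1 - (q.2 + p.1))]

theorem not_isLocalMin_zero (hc : -1 < c) : ¬ IsLocalMin (pairPotential c) 0 := fun h => by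
  have hexp : ∀ t : ℝ, pairPotential c (0 + t • (1, 1)) = pairPotential c (0 + (0 : ℝ) • (1, 1))
      + t ^ 2 * (t ^ 2 / 2 - (c + 1)) := fun t => by
    simp only [pairPotential, zero_add, Prod.smul_mk, smul_eq_mul]
    ring
  have := (h.comp_add_smul (1, 1)).nonneg_of_eq_add_sq_mul (by fun_prop) hexp
  linarith

theorem not_isLocalMin_of_mem_saddles (hc : 2 < c) {p : ℝ × ℝ} (hp : p ∈ saddles c) :
    ¬ IsLocalMin (pairPotential c) p := fun h => by
  obtain ⟨hmul, hsq⟩ := hp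
  have hexp : ∀ t : ℝ, pairPotential c (p + t • (p.2, -p.1))
      = pairPotential c (p + (0 : ℝ) • (p.2, -p.1))
        + t ^ 2 * (c ^ 2 * t ^ 2 / 4 - (p.2 ^ 2 - p.1 ^ 2 + t) ^ 2 / 2) := fun t => by
    have hnorm : (p.1 + t * p.2) ^ 2 + (p.2 + t * -p.1) ^ 2 - c = c * t ^ 2 := by
      linear_combination (1 + t ^ 2) * hsq
    have hprod : (p.1 + t * p.2) * (p.2 + t * -p.1) + 1 = t * (p.2 ^ 2 - p.1 ^ 2 + t) := by
      linear_combination (1 - t ^ 2) * hmul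
    simp only [pairPotential_eq_circle, Prod.fst_add, Prod.snd_add, Prod.smul_mk, smul_eq_mul,
      zero_mul, add_zero, hnorm, hprod, hsq, hmul]
    ring
  have := (h.comp_add_smul (p.2, -p.1)).nonneg_of_eq_add_sq_mul (by fun_prop) hexp
  have hdisc : (p.2 ^ 2 - p.1 ^ 2) ^ 2 = c ^ 2 - 4 := by
    linear_combination (p.1 ^ 2 + p.2 ^ 2 + c) * hsq - 4 * (p.1 * p.2 - 1) * hmul
  nlinarith

theorem setOf_isLocalMin_pairPotential (hc : 2 < c) :
    {p | IsLocalMin (pairPotential c) p} = diagonalWells c ∪ antidiagonalWells c := by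
  ext p
  refine ⟨fun h => ?_, ?_⟩
  · rcases criticalSet_eq c ▸ mem_criticalSet_of_isLocalMin h with (h0 | hwell) | hs
    · rw [mem_singleton_iff.mp h0] at h
      exact absurd h (not_isLocalMin_zero (by linarith))
    · exact hwell
    · exact absurd h (not_isLocalMin_of_mem_saddles hc hs)
  · rintro (hd | ha)
    · exact isLocalMin_of_mem_diagonalWells hd
    · exact isLocalMin_of_mem_antidiagonalWells hc ha

theorem diagonalWells_eq_image (c : ℝ) :
    diagonalWells c = (fun x => (x, x)) '' {x | x ^ 2 = c + 1} := by
  ext ⟨x, y⟩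
  simp only [diagonalWells, mem_image, mem_ofPred_eq, Prod.mk.injEq]
  constructor
  · rintro ⟨rfl, h⟩
    exact ⟨y, h, rfl, rfl⟩
  · rintro ⟨z, h, rfl, rfl⟩
    exact ⟨rfl, h⟩

theorem antidiagonalWells_eq_image (c : ℝ) :
    antidiagonalWells c = (fun x => (x, -x)) '' {x | x ^ 2 = c - 1} := by
  ext ⟨x, y⟩
  simp only [antidiagonalWells, mem_image, mem_ofPred_eq, Prod.mk.injEq]
  constructor
  · rintro ⟨rfl, h⟩
    exact ⟨x, h, rfl, rfl⟩
  · rintro ⟨z, h, rfl, rfl⟩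
    exact ⟨rfl, h⟩

theorem diagonalWells_eq (hc : -1 ≤ c) :
    diagonalWells c = {(√(c + 1), √(c + 1)), (-√(c + 1), -√(c + 1))} := by
  rw [diagonalWells_eq_image, Real.setOf_sq_eq (by linarith), image_pair]

theorem antidiagonalWells_eq (hc : 1 ≤ c) :
    antidiagonalWells c = {(√(c - 1), -√(c - 1)), (-√(c - 1), √(c - 1))} := by
  rw [antidiagonalWells_eq_image, Real.setOf_sq_eq (by linarith), image_pair, neg_neg]

theorem ncard_diagonalWells (hc : -1 < c) : (diagonalWells c).ncard = 2 := by
  rw [diagonalWells_eq_image, ncard_image_of_injective _ fun x y h => congrArg Prod.fst h,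
    Real.ncard_setOf_sq_eq (by linarith)]

theorem ncard_antidiagonalWells (hc : 1 < c) : (antidiagonalWells c).ncard = 2 := by
  rw [antidiagonalWells_eq_image, ncard_image_of_injective _ fun x y h => congrArg Prod.fst h,
    Real.ncard_setOf_sq_eq (by linarith)]

theorem ncard_saddles (hc : 2 < c) : (saddles c).ncard = 4 := by
  have hsaddles : saddles c = (fun p : ℝ × ℝ => (p.1 + p.2, p.1 - p.2)) ⁻¹'
      ({s | s ^ 2 = c - 2} ×ˢ {d | d ^ 2 = c + 2}) := by
    ext p
    simp only [saddles, mem_preimage, mem_prod, mem_ofPred_eq]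
    constructor
    · rintro ⟨hmul, hsq⟩
      exact ⟨by linear_combination hsq + 2 * hmul, by linear_combination hsq - 2 * hmul⟩
    · rintro ⟨hs, hd⟩
      exact ⟨by linear_combination hs / 4 - hd / 4, by linear_combination hs / 2 + hd / 2⟩
  have hinj : (fun p : ℝ × ℝ => (p.1 + p.2, p.1 - p.2)).Injective := fun p q h => by
    simp only [Prod.mk.injEq] at h
    exact Prod.ext (by linarith) (by linarith)
  have hsurj (s d : ℝ) : ((s + d) / 2 + (s - d) / 2, (s + d) / 2 - (s - d) / 2) = (s, d) :=
    Prod.ext (by ring) (by ring)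
  rw [hsaddles, ncard_preimage_of_injective_subset_range hinj
    fun ⟨s, d⟩ _ => ⟨((s + d) / 2, (s - d) / 2), hsurj s d⟩, ncard_prod,
    Real.ncard_setOf_sq_eq (by linarith), Real.ncard_setOf_sq_eq (by linarith)]

theorem ncard_diagonalWells_union_antidiagonalWells (hc : 2 < c) :
    (diagonalWells c ∪ antidiagonalWells c).ncard = 4 := by
  have hD := ncard_diagonalWells (c := c) (by linarith)
  have hA := ncard_antidiagonalWells (c := c) (by linarith)
  have hdisj : Disjoint (diagonalWells c) (antidiagonalWells c) :=
    disjoint_left.mpr fun p ⟨hd, hd'⟩ ⟨ha, _⟩ => by nlinarith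
  rw [ncard_union_eq hdisj (finite_of_ncard_ne_zero (by omega))
    (finite_of_ncard_ne_zero (by omega)), hD, hA]

theorem ncard_criticalSet (hc : 2 < c) : (criticalSet c).ncard = 9 := by
  have hW := ncard_diagonalWells_union_antidiagonalWells hc
  have hS := ncard_saddles hc
  have h0W : Disjoint {0} (diagonalWells c ∪ antidiagonalWells c) := by
    refine disjoint_singleton_left.mpr ?_
    rintro (⟨_, h⟩ | ⟨_, h⟩) <;> rw [Prod.fst_zero, zero_pow two_ne_zero] at h <;> linarith
  have hWS : Disjoint (diagonalWells c ∪ antidiagonalWells c) (saddles c) := by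
    refine disjoint_left.mpr ?_
    rintro p (⟨hd, _⟩ | ⟨ha, ha'⟩) ⟨hmul, _⟩ <;> nlinarith
  have h0S : Disjoint {0} (saddles c) :=
    disjoint_singleton_left.mpr fun ⟨h, _⟩ => by simp at h
  rw [criticalSet_eq, ncard_union_eq (disjoint_union_left.mpr ⟨h0S, hWS⟩)
      ((finite_singleton 0).union (finite_of_ncard_ne_zero (by omega)))
      (finite_of_ncard_ne_zero (by omega)),
    ncard_union_eq h0W (finite_singleton 0) (finite_of_ncard_ne_zero (by omega)),
    ncard_singleton, hW, hS]

end

theorem r2_critical_points_and_minima_general (α β : ℝ) (hα : α ^ 2 > β + 2)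
    (U : ℝ × ℝ → ℝ)
    (hU : U = fun p => (p.1 ^ 4 + p.2 ^ 4) / 4 + (β - α ^ 2) / 2 * (p.1 ^ 2 + p.2 ^ 2)
      - p.1 * p.2)
    (lam₁ lam₂ : ℝ) (h₁ : lam₁ = Real.sqrt (α ^ 2 - β + 1))
    (h₂ : lam₂ = Real.sqrt (α ^ 2 - β - 1)) :
    ({p : ℝ × ℝ | p.1 ^ 3 + (β - α ^ 2) * p.1 - p.2 = 0 ∧
        p.2 ^ 3 + (β - α ^ 2) * p.2 - p.1 = 0}).ncard = 9 ∧
    {p : ℝ × ℝ | IsLocalMin U p} =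
      {(lam₁, lam₁), (-lam₁, -lam₁), (lam₂, -lam₂), (-lam₂, lam₂)} ∧
    ({p : ℝ × ℝ | IsLocalMin U p}).ncard = 4 := by
  set c := α ^ 2 - β with hc_def
  have hc : 2 < c := by linarith
  have hUc : U = pairPotential c := by
    subst hU
    ext p
    simp only [pairPotential, hc_def]
    ring
  have hcrit : {p : ℝ × ℝ | p.1 ^ 3 + (β - α ^ 2) * p.1 - p.2 = 0 ∧
      p.2 ^ 3 + (β - α ^ 2) * p.2 - p.1 = 0} = criticalSet c := by
    simp only [criticalSet, show β - α ^ 2 = -c by ring, neg_mul, ← sub_eq_add_neg]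
  refine ⟨hcrit ▸ ncard_criticalSet hc, ?_, ?_⟩
  · rw [hUc, setOf_isLocalMin_pairPotential hc, diagonalWells_eq (by linarith),
      antidiagonalWells_eq (by linarith), ← h₁, ← h₂, insert_union, singleton_union]
  · rw [hUc, setOf_isLocalMin_pairPotential hc, ncard_diagonalWells_union_antidiagonalWells hc]

/-- For `β > 1` and `α² > β + 2`, the 2D potential
`U(x₁,x₂) = (x₁⁴+x₂⁴)/4 + ((β-α²)/2)(x₁²+x₂²) - x₁x₂` has exactly 9 critical points,
of which exactly the 4 points `(±λ₁,±λ₁)`, `(±λ₂,∓λ₂)` are local minima, where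
`λ₁ = √(α²-β+1)` and `λ₂ = √(α²-β-1)`. -/
theorem r2_critical_points_and_minima (α β : ℝ) (hβ : 1 < β) (hα : α ^ 2 > β + 2)
    (U : ℝ × ℝ → ℝ)
    (hU : U = fun p => (p.1 ^ 4 + p.2 ^ 4) / 4 + (β - α ^ 2) / 2 * (p.1 ^ 2 + p.2 ^ 2)
      - p.1 * p.2)
    (lam₁ lam₂ : ℝ) (h₁ : lam₁ = Real.sqrt (α ^ 2 - β + 1))
    (h₂ : lam₂ = Real.sqrt (α ^ 2 - β - 1)) :
    ({p : ℝ × ℝ | p.1 ^ 3 + (β - α ^ 2) * p.1 - p.2 = 0 ∧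
        p.2 ^ 3 + (β - α ^ 2) * p.2 - p.1 = 0}).ncard = 9 ∧
    {p : ℝ × ℝ | IsLocalMin U p} =
      {(lam₁, lam₁), (-lam₁, -lam₁), (lam₂, -lam₂), (-lam₂, lam₂)} ∧
    ({p : ℝ × ℝ | IsLocalMin U p}).ncard = 4 :=
  r2_critical_points_and_minima_general α β hα U hU lam₁ lam₂ h₁ h₂
end

section
/- Let \beta > 1 and \alpha^2 > \beta - 1, and let \lambda_1 = \sqrt{\alpha^2 - \beta + 1}. Then (\lambda_1, \lambda_1) and (-\lambda_1, -\lambda_1) are global minimum points of U(x_1,x_2) = (x_1^4 + x_2^4)/4 + ((\beta - \alpha^2)/2)(x_1^2 + x_2^2) - x_1 x_2, with minimal value -(\alpha^2-\beta+1)^2/2. -/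
/-!
With `c = α² - β + 1`, so that `(β - α²)/2 = (1 - c)/2`, the potential is a constant plus a
sum of squares,
`U(x, y) = -c²/2 + (x² - c)²/4 + (y² - c)²/4 + (x - y)²/2`,
and all three squares vanish at `x = y = ±√c`.
-/

noncomputable def quarticPotential (c : ℝ) (p : ℝ × ℝ) : ℝ :=
  (p.1 ^ 4 + p.2 ^ 4) / 4 + (1 - c) / 2 * (p.1 ^ 2 + p.2 ^ 2) - p.1 * p.2

theorem quarticPotential_eq_neg_sq_div_two_add_sum_sq (c : ℝ) (p : ℝ × ℝ) :
    quarticPotential c p =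
      -c ^ 2 / 2 + ((p.1 ^ 2 - c) ^ 2 / 4 + (p.2 ^ 2 - c) ^ 2 / 4 + (p.1 - p.2) ^ 2 / 2) := by
  unfold quarticPotential
  ring

theorem neg_sq_div_two_le_quarticPotential (c : ℝ) (p : ℝ × ℝ) :
    -c ^ 2 / 2 ≤ quarticPotential c p := by
  rw [quarticPotential_eq_neg_sq_div_two_add_sum_sq]
  have : 0 ≤ (p.1 ^ 2 - c) ^ 2 / 4 + (p.2 ^ 2 - c) ^ 2 / 4 + (p.1 - p.2) ^ 2 / 2 := by positivity
  linarith

theorem quarticPotential_diag_of_sq_eq {c t : ℝ} (ht : t ^ 2 = c) :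
    quarticPotential c (t, t) = -c ^ 2 / 2 := by
  simp [quarticPotential_eq_neg_sq_div_two_add_sum_sq, ht]

theorem r2_global_minima_general (α β : ℝ) (hα : α ^ 2 > β - 1)
    (U : ℝ × ℝ → ℝ)
    (hU : U = fun p => (p.1 ^ 4 + p.2 ^ 4) / 4 + (β - α ^ 2) / 2 * (p.1 ^ 2 + p.2 ^ 2)
      - p.1 * p.2)
    (lam₁ : ℝ) (h₁ : lam₁ = Real.sqrt (α ^ 2 - β + 1)) :
    U (lam₁, lam₁) = -(α ^ 2 - β + 1) ^ 2 / 2 ∧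
    U (-lam₁, -lam₁) = -(α ^ 2 - β + 1) ^ 2 / 2 ∧
    ∀ p : ℝ × ℝ, -(α ^ 2 - β + 1) ^ 2 / 2 ≤ U p := by
  have hU_eq : U = quarticPotential (α ^ 2 - β + 1) := by
    rw [hU]
    funext p
    unfold quarticPotential
    ring
  have hsq : lam₁ ^ 2 = α ^ 2 - β + 1 := by
    rw [h₁, Real.sq_sqrt (by linarith)]
  rw [hU_eq]
  exact ⟨quarticPotential_diag_of_sq_eq hsq, quarticPotential_diag_of_sq_eq (by rw [neg_sq, hsq]),
    neg_sq_div_two_le_quarticPotential _⟩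

/-- For `β > 1` and `α² > β - 1`, the points `(λ₁,λ₁)` and `(-λ₁,-λ₁)` with
`λ₁ = √(α²-β+1)` are global minimum points of
`U(x₁,x₂) = (x₁⁴+x₂⁴)/4 + ((β-α²)/2)(x₁²+x₂²) - x₁x₂`,
with minimal value `-(α²-β+1)²/2`. -/
theorem r2_global_minima (α β : ℝ) (hβ : 1 < β) (hα : α ^ 2 > β - 1)
    (U : ℝ × ℝ → ℝ)
    (hU : U = fun p => (p.1 ^ 4 + p.2 ^ 4) / 4 + (β - α ^ 2) / 2 * (p.1 ^ 2 + p.2 ^ 2)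
      - p.1 * p.2)
    (lam₁ : ℝ) (h₁ : lam₁ = Real.sqrt (α ^ 2 - β + 1)) :
    U (lam₁, lam₁) = -(α ^ 2 - β + 1) ^ 2 / 2 ∧
    U (-lam₁, -lam₁) = -(α ^ 2 - β + 1) ^ 2 / 2 ∧
    ∀ p : ℝ × ℝ, -(α ^ 2 - β + 1) ^ 2 / 2 ≤ U p :=
  r2_global_minima_general α β hα U hU lam₁ h₁
end

section
/- Consider the coherent Ising machine potential U_d(c,s) = \sum_j ((c_j^2+s_j^2)^2/4 - (p/2)(c_j^2 - s_j^2) + (1/2)(c_j^2+s_j^2)) - (1/2)c^T \Xi c - (1/2)s^T \Xi s, where \Xi is symmetric with zero diagonal and p exceeds the largest eigenvalue \lambda_\Xi of \Xi. Then every critical point (c,s) of U_d satisfies s = 0. -/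
/-!
At a critical point `(c, s)` the derivative of `t ↦ U_d(c, t • s)` at `t = 1` vanishes. It equals
`∑ j, s_j² (c_j² + s_j² + p + 1) - sᵀ Ξ s`, and since `sᵀ Ξ s ≤ λ_Ξ ∑ j, s_j²` with
`λ_Ξ < p < c_j² + s_j² + p + 1`, this forces every `s_j` to vanish.
-/

open Finset

lemma hasDerivAt_even_quartic (k a b : ℝ) :
    HasDerivAt (fun t : ℝ => k + a * t ^ 2 + b * t ^ 4) (2 * a + 4 * b) 1 := by
  refine ((((hasDerivAt_pow 2 (1 : ℝ)).const_mul a).const_add k).fun_add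
    ((hasDerivAt_pow 4 (1 : ℝ)).const_mul b)).congr_deriv ?_
  norm_num
  ring

lemma sum_sum_mul_smul_mul_smul {ι R : Type*} [Fintype ι] [CommSemiring R] (A : Matrix ι ι R)
    (t : R) (v : ι → R) :
    ∑ i, ∑ j, A i j * (t • v) i * (t • v) j = t ^ 2 * ∑ i, ∑ j, A i j * v i * v j := by
  simp only [Pi.smul_apply, smul_eq_mul, mul_sum]
  exact sum_congr rfl fun i _ => sum_congr rfl fun j _ => by ring

theorem HasFDerivAt.eq_zero_of_hasDerivAt_smul_snd {E F : Type*} [NormedAddCommGroup E]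
    [NormedSpace ℝ E] [NormedAddCommGroup F] [NormedSpace ℝ F] {f : E × F → ℝ} {x : E × F}
    (hf : HasFDerivAt f (0 : E × F →L[ℝ] ℝ) x) {d : ℝ}
    (hd : HasDerivAt (fun t : ℝ => f (x.1, t • x.2)) d 1) : d = 0 := by
  have hpath : HasDerivAt (fun t : ℝ => (x.1, t • x.2)) (0, x.2) 1 := by
    simpa using (hasDerivAt_const (1 : ℝ) x.1).prodMk ((hasDerivAt_id (1 : ℝ)).smul_const x.2)
  have hf' : HasFDerivAt f (0 : E × F →L[ℝ] ℝ) (x.1, (1 : ℝ) • x.2) := by simpa using hf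
  simpa using hd.unique (hf'.comp_hasDerivAt 1 hpath)

lemma eq_zero_of_sum_sq_mul_le {ι : Type*} [Fintype ι] {s w : ι → ℝ} {μ : ℝ}
    (hw : ∀ j, μ < w j) (h : ∑ j, s j ^ 2 * w j ≤ μ * ∑ j, s j ^ 2) : s = 0 := by
  have hnonneg : ∀ j ∈ univ, 0 ≤ s j ^ 2 * (w j - μ) := fun j _ =>
    mul_nonneg (sq_nonneg _) (sub_nonneg.mpr (hw j).le)
  have hsum : ∑ j, s j ^ 2 * (w j - μ) = 0 := by
    refine le_antisymm ?_ (sum_nonneg hnonneg)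
    rw [mul_sum] at h
    simpa only [mul_sub, sum_sub_distrib, sub_nonpos, mul_comm μ] using h
  have hzero := (sum_eq_zero_iff_of_nonneg hnonneg).mp hsum
  funext j
  simpa [(sub_pos.mpr (hw j)).ne'] using hzero j (mem_univ j)

noncomputable def cimPotential {ι : Type*} [Fintype ι] (Xi : Matrix ι ι ℝ) (p : ℝ)
    (cs : (ι → ℝ) × (ι → ℝ)) : ℝ :=
  (∑ j, (((cs.1 j) ^ 2 + (cs.2 j) ^ 2) ^ 2 / 4
    - p / 2 * ((cs.1 j) ^ 2 - (cs.2 j) ^ 2)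
    + (1 / 2) * ((cs.1 j) ^ 2 + (cs.2 j) ^ 2)))
  - (1 / 2) * (∑ i, ∑ j, Xi i j * cs.1 i * cs.1 j)
  - (1 / 2) * (∑ i, ∑ j, Xi i j * cs.2 i * cs.2 j)

namespace cimPotential

variable {ι : Type*} [Fintype ι] (Xi : Matrix ι ι ℝ) (p : ℝ)

theorem differentiable : Differentiable ℝ (cimPotential Xi p) := by
  unfold cimPotential; fun_prop

lemma hasDerivAt_onsite (x y : ℝ) :
    HasDerivAt (fun t : ℝ => ((x ^ 2 + (t * y) ^ 2) ^ 2 / 4 - p / 2 * (x ^ 2 - (t * y) ^ 2)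
        + (1 / 2) * (x ^ 2 + (t * y) ^ 2)))
      (y ^ 2 * (x ^ 2 + y ^ 2 + p + 1)) 1 := by
  have hquartic : (fun t : ℝ => ((x ^ 2 + (t * y) ^ 2) ^ 2 / 4 - p / 2 * (x ^ 2 - (t * y) ^ 2)
        + (1 / 2) * (x ^ 2 + (t * y) ^ 2))) = fun t => (x ^ 4 / 4 - p / 2 * x ^ 2 + x ^ 2 / 2)
        + (x ^ 2 * y ^ 2 / 2 + p / 2 * y ^ 2 + y ^ 2 / 2) * t ^ 2 + y ^ 4 / 4 * t ^ 4 := by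
    funext t; ring
  rw [hquartic]
  exact (hasDerivAt_even_quartic _ _ _).congr_deriv (by ring)

theorem hasDerivAt_smul_snd (c s : ι → ℝ) :
    HasDerivAt (fun t : ℝ => cimPotential Xi p (c, t • s))
      (∑ j, s j ^ 2 * (c j ^ 2 + s j ^ 2 + p + 1) - ∑ i, ∑ j, Xi i j * s i * s j) 1 := by
  have hsites := HasDerivAt.fun_sum (u := univ) fun j _ => hasDerivAt_onsite p (c j) (s j)
  have hcoupling := ((hasDerivAt_pow 2 (1 : ℝ)).mul_const
    (∑ i, ∑ j, Xi i j * s i * s j)).const_mul (1 / 2 : ℝ)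
  simp only [cimPotential, sum_sum_mul_smul_mul_smul]
  simp only [Pi.smul_apply, smul_eq_mul]
  exact ((hsites.sub_const _).fun_sub hcoupling).congr_deriv (by norm_num; ring)

end cimPotential

theorem cim_critical_points_s_eq_zero_general (n : ℕ) (Xi : Matrix (Fin n) (Fin n) ℝ)
    (lamXi p : ℝ)
    (hlam : ∀ v : Fin n → ℝ, ∑ i, ∑ j, Xi i j * v i * v j ≤ lamXi * ∑ i, (v i) ^ 2)
    (hp : p > lamXi)
    (Ud : (Fin n → ℝ) × (Fin n → ℝ) → ℝ)
    (hUd : Ud = fun cs =>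
      (∑ j, (((cs.1 j) ^ 2 + (cs.2 j) ^ 2) ^ 2 / 4
        - p / 2 * ((cs.1 j) ^ 2 - (cs.2 j) ^ 2)
        + (1 / 2) * ((cs.1 j) ^ 2 + (cs.2 j) ^ 2)))
      - (1 / 2) * (∑ i, ∑ j, Xi i j * cs.1 i * cs.1 j)
      - (1 / 2) * (∑ i, ∑ j, Xi i j * cs.2 i * cs.2 j)) :
    ∀ cs : (Fin n → ℝ) × (Fin n → ℝ), fderiv ℝ Ud cs = 0 → cs.2 = 0 := by
  rintro ⟨c, s⟩ hcrit
  obtain rfl : Ud = cimPotential Xi p := hUd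
  have hcritical : HasFDerivAt (cimPotential Xi p) 0 (c, s) :=
    hcrit ▸ (cimPotential.differentiable Xi p (c, s)).hasFDerivAt
  have hbalance := hcritical.eq_zero_of_hasDerivAt_smul_snd
    (cimPotential.hasDerivAt_smul_snd Xi p c s)
  refine eq_zero_of_sum_sq_mul_le (fun j => ?_) ((sub_eq_zero.mp hbalance).trans_le (hlam s))
  linarith [sq_nonneg (c j), sq_nonneg (s j)]

/-- For the CIM potential `U_d(c,s)`, if `p` exceeds the largest eigenvalue `λ_Ξ` of the
symmetric zero-diagonal matrix `Ξ`, then every critical point `(c,s)` of `U_d` has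
`s = 0`. -/
theorem cim_critical_points_s_eq_zero (n : ℕ) (Xi : Matrix (Fin n) (Fin n) ℝ)
    (hXi : Xi.IsSymm) (hXid : ∀ i, Xi i i = 0) (lamXi p : ℝ)
    (hlam : ∀ v : Fin n → ℝ, ∑ i, ∑ j, Xi i j * v i * v j ≤ lamXi * ∑ i, (v i) ^ 2)
    (hp : p > lamXi)
    (Ud : (Fin n → ℝ) × (Fin n → ℝ) → ℝ)
    (hUd : Ud = fun cs =>
      (∑ j, (((cs.1 j) ^ 2 + (cs.2 j) ^ 2) ^ 2 / 4
        - p / 2 * ((cs.1 j) ^ 2 - (cs.2 j) ^ 2)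
        + (1 / 2) * ((cs.1 j) ^ 2 + (cs.2 j) ^ 2)))
      - (1 / 2) * (∑ i, ∑ j, Xi i j * cs.1 i * cs.1 j)
      - (1 / 2) * (∑ i, ∑ j, Xi i j * cs.2 i * cs.2 j)) :
    ∀ cs : (Fin n → ℝ) × (Fin n → ℝ), fderiv ℝ Ud cs = 0 → cs.2 = 0 :=
  cim_critical_points_s_eq_zero_general n Xi lamXi p hlam hp Ud hUd
end
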